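/- arXiv:2111.05839 — 5 statements merged into one kernel-verified Lean document; each statement's English description precedes it below -/
import Mathlib

section
/- Let β^EQ be the common fill-rate of a feasible perfectly equitable solution that is non-utopian (Σ_i β^EQ D_i < S), and let m^U be the number of indices i with β^EQ < β̃_i (unbinding variables), with 0 < m^U < n. Then for every θ < m^U/(n − m^U) there exists a feasible solution (β, β_max) with objective Σ_i [β_i − θ(β_max − β_i)] strictly greater than Σ_i β^EQ = n·β^EQ. -/
/-!
Raise every unbinding agency from `β^EQ` to `β^EQ + ε` and put `β_max = β^EQ + ε`. For small
`ε > 0` this stays feasible, since every constraint it moves (`β_i ≤ β̃_i` for unbinding `i`,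
`β_max ≤ 1`, the supply constraint) is slack at the equitable solution. The objective grows by
`ε (m^U - θ (n - m^U))`, which is positive exactly when `θ < m^U / (n - m^U)`.
-/

open Filter Topology

section RaiseOn

variable {ι : Type*} [Fintype ι] [DecidableEq ι]

def raiseOn (s : Finset ι) (b ε : ℝ) (i : ι) : ℝ :=
  if i ∈ s then b + ε else b

theorem sum_raiseOn_mul (s : Finset ι) (b ε : ℝ) (w : ι → ℝ) :
    ∑ i, raiseOn s b ε i * w i = ∑ i, b * w i + ε * ∑ i ∈ s, w i := by
  have hterm : ∀ i, raiseOn s b ε i * w i = b * w i + ε * if i ∈ s then w i else 0 := by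
    intro i
    unfold raiseOn
    split_ifs <;> ring
  simp only [hterm, Finset.sum_add_distrib, ← Finset.mul_sum, Finset.sum_ite_mem,
    Finset.univ_inter]

theorem sum_raiseOn_objective (s : Finset ι) (b ε θ : ℝ) :
    ∑ i, (raiseOn s b ε i - θ * (b + ε - raiseOn s b ε i)) =
      Fintype.card ι * b + ε * (s.card - θ * (Fintype.card ι - s.card)) := by
  have h := sum_raiseOn_mul s b ε (fun _ => 1)
  simp only [mul_one, Finset.sum_const, Finset.card_univ, nsmul_eq_mul] at h
  have hterm : ∀ i, raiseOn s b ε i - θ * (b + ε - raiseOn s b ε i) =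
      (1 + θ) * raiseOn s b ε i - θ * (b + ε) := fun i => by ring
  simp only [hterm, Finset.sum_sub_distrib, ← Finset.mul_sum, h, Finset.sum_const,
    Finset.card_univ, nsmul_eq_mul]
  ring

end RaiseOn

theorem stmt_1_general (n mU : ℕ)
    (D βt : Fin n → ℝ) (S βEQ θ : ℝ)
    (hEQ0 : 0 ≤ βEQ) (hEQ1 : βEQ < 1)
    (hEQle : ∀ i, βEQ ≤ βt i)
    (hmU : mU = (Finset.univ.filter (fun i => βEQ < βt i)).card)
    (hmUn : mU < n)
    (hnonut : (∑ i, βEQ * D i) < S)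
    (hθ : θ < (mU : ℝ) / ((n : ℝ) - (mU : ℝ))) :
    ∃ (β : Fin n → ℝ) (βmax : ℝ),
      ((∀ i, 0 ≤ β i ∧ β i ≤ βt i) ∧ (∀ i, β i ≤ βmax) ∧ βmax ≤ 1 ∧
        (∑ i, β i * D i) ≤ S) ∧
      (n : ℝ) * βEQ < ∑ i, (β i - θ * (βmax - β i)) := by
  set F := Finset.univ.filter (fun i => βEQ < βt i)
  have hsmall : ∀ᶠ ε in 𝓝 (0 : ℝ), (∀ i ∈ F, βEQ + ε ≤ βt i) ∧ βEQ + ε ≤ 1 ∧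
      ∑ i, raiseOn F βEQ ε i * D i ≤ S := by
    refine ((eventually_all_finset F).2 fun i hi => ?_).and (.and ?_ ?_)
    · have := sub_pos.2 (Finset.mem_filter.1 hi).2
      exact (eventually_lt_nhds this).mono fun ε h => by linarith
    · exact (eventually_lt_nhds (sub_pos.2 hEQ1)).mono fun ε h => by linarith
    · simp only [sum_raiseOn_mul]
      refine (ContinuousAt.eventually_lt (by fun_prop) continuousAt_const ?_).mono
        fun ε h => h.le
      simpa using hnonut
  obtain ⟨ε, hε, hF, hmax, hsupply⟩ :=
    ((eventually_mem_nhdsWithin (s := Set.Ioi 0)).and (nhdsWithin_le_nhds hsmall)).exists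
  rw [Set.mem_Ioi] at hε
  refine ⟨raiseOn F βEQ ε, βEQ + ε, ⟨fun i => ⟨?_, ?_⟩, fun i => ?_, hmax, hsupply⟩, ?_⟩
  · unfold raiseOn; split_ifs <;> linarith
  · unfold raiseOn; split_ifs with hi
    exacts [hF i hi, hEQle i]
  · unfold raiseOn; split_ifs <;> linarith
  · rw [sum_raiseOn_objective, ← hmU, Fintype.card_fin]
    have hgap : θ * (n - mU) < mU :=
      (lt_div_iff₀ (sub_pos.2 (by exact_mod_cast hmUn))).1 hθ
    nlinarith

theorem stmt_1 (n mU : ℕ) (hn : 0 < n)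
    (D βt : Fin n → ℝ) (S βEQ θ : ℝ)
    (hD : ∀ i, 0 < D i) (hS : 0 < S)
    (hβt : ∀ i, 0 ≤ βt i ∧ βt i ≤ 1)
    (hEQ0 : 0 ≤ βEQ) (hEQ1 : βEQ < 1)
    (hEQle : ∀ i, βEQ ≤ βt i)
    (hmU : mU = (Finset.univ.filter (fun i => βEQ < βt i)).card)
    (hmU0 : 0 < mU) (hmUn : mU < n)
    (hnonut : (∑ i, βEQ * D i) < S)
    (hθ0 : 0 ≤ θ) (hθ : θ < (mU : ℝ) / ((n : ℝ) - (mU : ℝ))) :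
    ∃ (β : Fin n → ℝ) (βmax : ℝ),
      ((∀ i, 0 ≤ β i ∧ β i ≤ βt i) ∧ (∀ i, β i ≤ βmax) ∧ βmax ≤ 1 ∧
        (∑ i, β i * D i) ≤ S) ∧
      (n : ℝ) * βEQ < ∑ i, (β i - θ * (βmax - β i)) :=
  stmt_1_general n mU D βt S βEQ θ hEQ0 hEQ1 hEQle hmU hmUn hnonut hθ
end

section
/- Let β^EQ be the common fill-rate of a feasible perfectly equitable solution with β̃_i = β^EQ for exactly n − m^U indices (binding) and β^EQ ≤ β̃_i for all i. Then for every θ ≥ m^U/(n − m^U) (with m^U < n), every feasible solution (β, β_max) satisfies Σ_i [β_i − θ(β_max − β_i)] ≤ n·β^EQ, i.e., the perfectly equitable solution is optimal. -/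
/-!
Write `c = min βEQ βmax`. Each summand `x - θ (βmax - x)` is increasing in `x`, so it is at most
`c - θ (βmax - c)` on the `n - mU` binding indices (where `β i ≤ βEQ`) and at most `βmax` on the
other `mU`. The resulting bound is `n c + (mU - θ (n - mU)) (βmax - c)`, and the condition on `θ`
makes the second term nonpositive.
-/

open Finset

theorem Finset.sum_le_card_nsmul_add_card_compl_nsmul {ι M : Type*} [Fintype ι] [DecidableEq ι]
    [AddCommMonoid M] [PartialOrder M] [IsOrderedAddMonoid M] (A : Finset ι) (f : ι → M) {a b : M}
    (ha : ∀ i ∈ A, f i ≤ a) (hb : ∀ i ∈ Aᶜ, f i ≤ b) :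
    ∑ i, f i ≤ #A • a + #Aᶜ • b := by
  rw [← sum_add_sum_compl A f]
  exact add_le_add (sum_le_card_nsmul A f a ha) (sum_le_card_nsmul Aᶜ f b hb)

lemma sub_mul_sub_le_sub_mul_sub {θ M x y : ℝ} (hθ : 0 ≤ 1 + θ) (hxy : x ≤ y) :
    x - θ * (M - x) ≤ y - θ * (M - y) := by
  nlinarith [mul_nonneg hθ (sub_nonneg.2 hxy)]

lemma mul_penalized_add_mul_le {k m θ c M : ℝ} (hθ : m ≤ θ * k) (hcM : c ≤ M) :
    k * (c - θ * (M - c)) + m * M ≤ (k + m) * c := by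
  nlinarith [mul_nonneg (sub_nonneg.2 hθ) (sub_nonneg.2 hcM)]

theorem stmt_2_general (n mU : ℕ)
    (D βt : Fin n → ℝ) (S βEQ θ : ℝ)
    (hA : (Finset.univ.filter (fun i => βt i = βEQ)).card = n - mU)
    (hmUn : mU < n)
    (hθ : (mU : ℝ) / ((n : ℝ) - (mU : ℝ)) ≤ θ) :
    ∀ (β : Fin n → ℝ) (βmax : ℝ),
      ((∀ i, 0 ≤ β i ∧ β i ≤ βt i) ∧ (∀ i, β i ≤ βmax) ∧ βmax ≤ 1 ∧
        (∑ i, β i * D i) ≤ S) →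
      (∑ i, (β i - θ * (βmax - β i))) ≤ (n : ℝ) * βEQ := by
  rintro β βmax ⟨hfeas, hle, -, -⟩
  set A := univ.filter (fun i => βt i = βEQ)
  set c := min βEQ βmax
  have hAc : #Aᶜ = mU := by rw [card_compl, Fintype.card_fin, hA]; omega
  have hpos : (0 : ℝ) < n - mU := sub_pos.2 (by exact_mod_cast hmUn)
  have hθk : (mU : ℝ) ≤ θ * (n - mU) := (div_le_iff₀ hpos).1 hθ
  have hθ1 : 0 ≤ 1 + θ := by linarith [div_nonneg (Nat.cast_nonneg mU) hpos.le]
  have hbind : ∀ i ∈ A, β i - θ * (βmax - β i) ≤ c - θ * (βmax - c) := fun i hi =>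
    sub_mul_sub_le_sub_mul_sub hθ1
      (le_min ((hfeas i).2.trans (mem_filter.1 hi).2.le) (hle i))
  have hfree : ∀ i ∈ Aᶜ, β i - θ * (βmax - β i) ≤ βmax := fun i _ => by
    simpa using sub_mul_sub_le_sub_mul_sub (M := βmax) hθ1 (hle i)
  calc ∑ i, (β i - θ * (βmax - β i))
      ≤ #A • (c - θ * (βmax - c)) + #Aᶜ • βmax :=
        sum_le_card_nsmul_add_card_compl_nsmul A _ hbind hfree
    _ = ((n : ℝ) - mU) * (c - θ * (βmax - c)) + mU * βmax := by
        rw [nsmul_eq_mul, nsmul_eq_mul, hA, hAc, Nat.cast_sub hmUn.le]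
    _ ≤ ((n - mU) + mU) * c := mul_penalized_add_mul_le hθk (min_le_right _ _)
    _ = n * c := by ring
    _ ≤ n * βEQ := mul_le_mul_of_nonneg_left (min_le_left _ _) (Nat.cast_nonneg n)

theorem stmt_2 (n mU : ℕ) (hn : 0 < n)
    (D βt : Fin n → ℝ) (S βEQ θ : ℝ)
    (hD : ∀ i, 0 < D i) (hS : 0 < S)
    (hβt : ∀ i, 0 ≤ βt i ∧ βt i ≤ 1)
    (hEQ0 : 0 ≤ βEQ)
    (hEQle : ∀ i, βEQ ≤ βt i)
    (hA : (Finset.univ.filter (fun i => βt i = βEQ)).card = n - mU)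
    (hmUn : mU < n)
    (hθ : (mU : ℝ) / ((n : ℝ) - (mU : ℝ)) ≤ θ) :
    ∀ (β : Fin n → ℝ) (βmax : ℝ),
      ((∀ i, 0 ≤ β i ∧ β i ≤ βt i) ∧ (∀ i, β i ≤ βmax) ∧ βmax ≤ 1 ∧
        (∑ i, β i * D i) ≤ S) →
      (∑ i, (β i - θ * (βmax - β i))) ≤ (n : ℝ) * βEQ :=
  stmt_2_general n mU D βt S βEQ θ hA hmUn hθ
end

section
/- Under perfect equity with common fill-rate β^EQ = β^b = min_i β̃_i < S/D, the tightest upper bound on the penalty factor is θ^U = m^U/(n − m^U) where m^U = n − |J| and J = {j : β̃_j = β^b}; in particular θ^U ≤ n − 1. -/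
/-!
Let `J` be the set of agencies whose cap `β̃_j` equals the common fill-rate `β^b`, `k = |J|`
and `m = n - k`.  For a feasible `β` with maximum `βmax`, the penalised objective is at most
`k((1+θ)c - θ βmax) + m βmax` with `c = min β^b βmax`, and since `c ≤ βmax` this is at most
`n c ≤ n β^b` as soon as `m ≤ θ k`.  Conversely, if `θ k < m`, raising every agency outside `J`
by a small `ε > 0` (possible because `β^b < S/D` and the caps outside `J` exceed `β^b`)
raises the objective by `(m - θ k) ε > 0`.
-/

open Finset Filter Topology

theorem exists_pos_add_le_of_lt {ι : Type*} {s : Finset ι} {x : ι → ℝ} {b c : ℝ} (hc : b < c)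
    (hx : ∀ i ∈ s, b < x i) : ∃ ε > 0, b + ε ≤ c ∧ ∀ i ∈ s, b + ε ≤ x i := by
  have hsmall : ∀ᶠ ε in 𝓝 (0 : ℝ), b + ε ≤ c ∧ ∀ i ∈ s, b + ε ≤ x i := by
    refine (eventually_le_nhds (sub_pos.2 hc)).mono (fun ε hε => by linarith) |>.and ?_
    refine (eventually_all_finset s).2 fun i hi => ?_
    exact (eventually_le_nhds (sub_pos.2 (hx i hi))).mono fun ε hε => by linarith
  exact (eventually_mem_nhdsWithin.and (nhdsWithin_le_nhds hsmall) :
    ∀ᶠ ε in 𝓝[>] (0 : ℝ), _).exists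

variable {ι : Type*} [Fintype ι]

def Feasible (D βt : ι → ℝ) (S : ℝ) (β : ι → ℝ) (βmax : ℝ) : Prop :=
  (∀ i, 0 ≤ β i ∧ β i ≤ βt i) ∧ (∀ i, β i ≤ βmax) ∧ βmax ≤ 1 ∧ ∑ i, β i * D i ≤ S

def penalizedObjective (θ : ℝ) (β : ι → ℝ) (βmax : ℝ) : ℝ :=
  ∑ i, (β i - θ * (βmax - β i))

variable [DecidableEq ι]

theorem penalizedObjective_le {J : Finset ι} {β : ι → ℝ} {βmax b θ : ℝ} (hθ0 : 0 ≤ θ)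
    (hθ : (#Jᶜ : ℝ) ≤ θ * #J) (hJ : ∀ j ∈ J, β j ≤ b) (hmax : ∀ i, β i ≤ βmax) :
    penalizedObjective θ β βmax ≤ Fintype.card ι * b := by
  set c := min b βmax
  have hcb : c ≤ b := min_le_left _ _
  have hcmax : c ≤ βmax := min_le_right _ _
  have hin : ∀ j ∈ J, β j - θ * (βmax - β j) ≤ (1 + θ) * c - θ * βmax := fun j hj => by
    nlinarith [le_min (hJ j hj) (hmax j)]
  have hout : ∀ i ∈ Jᶜ, β i - θ * (βmax - β i) ≤ βmax := fun i _ => by nlinarith [hmax i]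
  calc penalizedObjective θ β βmax
      ≤ #J * ((1 + θ) * c - θ * βmax) + #Jᶜ * βmax := by
        rw [penalizedObjective, ← sum_add_sum_compl J, ← nsmul_eq_mul, ← nsmul_eq_mul]
        exact add_le_add (sum_le_card_nsmul _ _ _ hin) (sum_le_card_nsmul _ _ _ hout)
    _ ≤ (#J + #Jᶜ) * c := by
        nlinarith [mul_le_mul_of_nonneg_right hθ (sub_nonneg.2 hcmax)]
    _ ≤ Fintype.card ι * b := by
        rw [← card_add_card_compl J, Nat.cast_add]
        exact mul_le_mul_of_nonneg_left hcb (by positivity)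

theorem penalizedObjective_piecewise (J : Finset ι) (θ b ε : ℝ) :
    penalizedObjective θ (J.piecewise (fun _ => b) fun _ => b + ε) (b + ε) =
      Fintype.card ι * b + (#Jᶜ - θ * #J) * ε := by
  have hin : ∀ j ∈ J, J.piecewise (fun _ => b) (fun _ => b + ε) j
      - θ * (b + ε - J.piecewise (fun _ => b) (fun _ => b + ε) j) = b - θ * ε := fun j hj => by
    rw [piecewise_eq_of_mem _ _ _ hj]; ring
  have hout : ∀ i ∈ Jᶜ, J.piecewise (fun _ => b) (fun _ => b + ε) i
      - θ * (b + ε - J.piecewise (fun _ => b) (fun _ => b + ε) i) = b + ε := fun i hi => by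
    rw [piecewise_eq_of_notMem _ _ _ (mem_compl.1 hi)]; ring
  rw [penalizedObjective, ← sum_add_sum_compl J, sum_congr rfl hin, sum_congr rfl hout,
    sum_const, sum_const, nsmul_eq_mul, nsmul_eq_mul, ← card_add_card_compl J, Nat.cast_add]
  ring

theorem feasible_piecewise {D βt : ι → ℝ} {S : ℝ} {J : Finset ι} {b ε : ℝ}
    (hD : ∀ i, 0 ≤ D i) (hb : 0 ≤ b) (hε : 0 ≤ ε) (hJ : ∀ j ∈ J, b ≤ βt j)
    (hJc : ∀ i ∈ Jᶜ, b + ε ≤ βt i) (h1 : b + ε ≤ 1) (hS : (b + ε) * ∑ i, D i ≤ S) :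
    Feasible D βt S (J.piecewise (fun _ => b) fun _ => b + ε) (b + ε) := by
  have hbounds : ∀ i, 0 ≤ J.piecewise (fun _ => b) (fun _ => b + ε) i ∧
      J.piecewise (fun _ => b) (fun _ => b + ε) i ≤ βt i ∧
      J.piecewise (fun _ => b) (fun _ => b + ε) i ≤ b + ε := fun i => by
    by_cases hi : i ∈ J
    · rw [piecewise_eq_of_mem _ _ _ hi]; exact ⟨hb, hJ i hi, by linarith⟩
    · rw [piecewise_eq_of_notMem _ _ _ hi]; exact ⟨by linarith, hJc i (mem_compl.2 hi), le_rfl⟩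
  refine ⟨fun i => ⟨(hbounds i).1, (hbounds i).2.1⟩, fun i => (hbounds i).2.2, h1, ?_⟩
  calc ∑ i, J.piecewise (fun _ => b) (fun _ => b + ε) i * D i
      ≤ ∑ i, (b + ε) * D i :=
        sum_le_sum fun i _ => mul_le_mul_of_nonneg_right (hbounds i).2.2 (hD i)
    _ = (b + ε) * ∑ i, D i := (mul_sum _ _ _).symm
    _ ≤ S := hS

theorem stmt_6_general (n : ℕ)
    (D βt : Fin n → ℝ) (S βb : ℝ)
    (hD : ∀ i, 0 < D i)
    (hβt : ∀ i, 0 < βt i ∧ βt i ≤ 1)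
    (hβb : IsLeast (Set.range βt) βb)
    (hnonut : βb < S / (∑ i, D i))
    (mU : ℕ)
    (hmU : mU = n - (Finset.univ.filter (fun j => βt j = βb)).card)
    (hJ : (Finset.univ.filter (fun j => βt j = βb)).Nonempty) :
    (∀ θ : ℝ, (mU : ℝ) / ((n : ℝ) - (mU : ℝ)) ≤ θ →
      ∀ (β : Fin n → ℝ) (βmax : ℝ),
        ((∀ i, 0 ≤ β i ∧ β i ≤ βt i) ∧ (∀ i, β i ≤ βmax) ∧ βmax ≤ 1 ∧
          (∑ i, β i * D i) ≤ S) →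
        (∑ i, (β i - θ * (βmax - β i))) ≤ (n : ℝ) * βb) ∧
    (∀ θ : ℝ, 0 ≤ θ → θ < (mU : ℝ) / ((n : ℝ) - (mU : ℝ)) →
      ∃ (β : Fin n → ℝ) (βmax : ℝ),
        ((∀ i, 0 ≤ β i ∧ β i ≤ βt i) ∧ (∀ i, β i ≤ βmax) ∧ βmax ≤ 1 ∧
          (∑ i, β i * D i) ≤ S) ∧
        (n : ℝ) * βb < ∑ i, (β i - θ * (βmax - β i))) ∧
    (mU : ℝ) / ((n : ℝ) - (mU : ℝ)) ≤ (n : ℝ) - 1 := by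
  set J := univ.filter fun j => βt j = βb
  have hcard : #J + #Jᶜ = n := (card_add_card_compl J).trans (Fintype.card_fin n)
  have hn' : (n : ℝ) = #J + #Jᶜ := by exact_mod_cast hcard.symm
  have hk : (1 : ℝ) ≤ #J := by exact_mod_cast hJ.card_pos
  have hratio : (mU : ℝ) / (n - mU) = #Jᶜ / #J := by
    rw [show mU = #Jᶜ by omega, hn', add_sub_cancel_right]
  have hβb0 : 0 ≤ βb := by obtain ⟨i, rfl⟩ := hβb.1; exact (hβt i).1.le
  rw [hratio]
  refine ⟨fun θ hθ β βmax hβ => ?_, fun θ hθ0 hθ => ?_, ?_⟩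
  · have hθ0 : 0 ≤ θ := (by positivity : (0 : ℝ) ≤ #Jᶜ / #J).trans hθ
    rw [div_le_iff₀ (by linarith)] at hθ
    have hJβ : ∀ j ∈ J, β j ≤ βb := fun j hj => (mem_filter.1 hj).2 ▸ (hβ.1 j).2
    simpa only [penalizedObjective, Fintype.card_fin] using
      penalizedObjective_le hθ0 hθ hJβ hβ.2.1
  · rw [lt_div_iff₀ (by linarith)] at hθ
    have hm : (0 : ℝ) < #Jᶜ := (by positivity : 0 ≤ θ * #J).trans_lt hθ
    obtain ⟨i₀, hi₀⟩ : Jᶜ.Nonempty := card_pos.1 (by exact_mod_cast hm)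
    have hJc : ∀ i ∈ Jᶜ, βb < βt i := fun i hi =>
      (hβb.2 ⟨i, rfl⟩).lt_of_ne' (by simpa [J] using hi)
    obtain ⟨ε, hε, hεS, hεβt⟩ := exists_pos_add_le_of_lt hnonut hJc
    have hDpos : 0 < ∑ i, D i := sum_pos (fun i _ => hD i) ⟨i₀, mem_univ _⟩
    refine ⟨_, _, feasible_piecewise (fun i => (hD i).le) hβb0 hε.le
      (fun j hj => (mem_filter.1 hj).2.ge) hεβt ((hεβt i₀ hi₀).trans (hβt i₀).2)
      ((le_div_iff₀ hDpos).1 hεS), ?_⟩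
    have hgain : 0 < ((#Jᶜ : ℝ) - θ * #J) * ε := mul_pos (sub_pos.2 hθ) hε
    have hobj := penalizedObjective_piecewise J θ βb ε
    rw [Fintype.card_fin] at hobj
    show (n : ℝ) * βb < penalizedObjective θ _ _
    linarith
  · calc (#Jᶜ : ℝ) / #J ≤ #Jᶜ := div_le_self (by positivity) hk
      _ ≤ n - 1 := by linarith

theorem stmt_6 (n : ℕ) (hn : 2 ≤ n)
    (D βt : Fin n → ℝ) (S βb : ℝ)
    (hD : ∀ i, 0 < D i) (hS : 0 < S)
    (hβt : ∀ i, 0 < βt i ∧ βt i ≤ 1)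
    (hβb : IsLeast (Set.range βt) βb)
    (hnonut : βb < S / (∑ i, D i))
    (mU : ℕ)
    (hmU : mU = n - (Finset.univ.filter (fun j => βt j = βb)).card)
    (hJ : (Finset.univ.filter (fun j => βt j = βb)).Nonempty) :
    (∀ θ : ℝ, (mU : ℝ) / ((n : ℝ) - (mU : ℝ)) ≤ θ →
      ∀ (β : Fin n → ℝ) (βmax : ℝ),
        ((∀ i, 0 ≤ β i ∧ β i ≤ βt i) ∧ (∀ i, β i ≤ βmax) ∧ βmax ≤ 1 ∧
          (∑ i, β i * D i) ≤ S) →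
        (∑ i, (β i - θ * (βmax - β i))) ≤ (n : ℝ) * βb) ∧
    (∀ θ : ℝ, 0 ≤ θ → θ < (mU : ℝ) / ((n : ℝ) - (mU : ℝ)) →
      ∃ (β : Fin n → ℝ) (βmax : ℝ),
        ((∀ i, 0 ≤ β i ∧ β i ≤ βt i) ∧ (∀ i, β i ≤ βmax) ∧ βmax ≤ 1 ∧
          (∑ i, β i * D i) ≤ S) ∧
        (n : ℝ) * βb < ∑ i, (β i - θ * (βmax - β i))) ∧
    (mU : ℝ) / ((n : ℝ) - (mU : ℝ)) ≤ (n : ℝ) - 1 :=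
  stmt_6_general n D βt S βb hD hβt hβb hnonut mU hmU hJ
end

section
/- In a two-agency network with equal effective demands (β̃_1 D_1 = β̃_2 D_2) and D_1 < D_2, any efficiency-maximizing allocation under scarce supply S < β̃_1 D_1 allocates the entire supply to agency 1: the unique θ=0 optimum is β_1 = S/D_1, β_2 = 0. -/
/-! Since `D₁ < D₂`, shifting demand from agency 2 to agency 1 frees supply:
`(β₁ + β₂) D₁ = β₁ D₁ + β₂ D₂ - β₂ (D₂ - D₁) ≤ S`, with equality only when `β₂ = 0`. -/

section WeightedSum

variable {R : Type*} [CommRing R] [LinearOrder R] [IsStrictOrderedRing R] {x₁ x₂ d₁ d₂ : R}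

lemma add_mul_le_mul_add_mul (hd : d₁ ≤ d₂) (hx₂ : 0 ≤ x₂) :
    (x₁ + x₂) * d₁ ≤ x₁ * d₁ + x₂ * d₂ := by
  nlinarith

lemma eq_zero_of_mul_add_mul_le_add_mul (hd : d₁ < d₂) (hx₂ : 0 ≤ x₂)
    (h : x₁ * d₁ + x₂ * d₂ ≤ (x₁ + x₂) * d₁) : x₂ = 0 := by
  have hgap : x₂ * (d₂ - d₁) ≤ 0 := by linear_combination h
  exact le_antisymm (nonpos_of_mul_nonpos_left hgap (sub_pos.2 hd)) hx₂

end WeightedSum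

theorem stmt_11_general (D₁ D₂ βt₁ βt₂ S : ℝ)
    (hD : 0 < D₁) (hDlt : D₁ < D₂) :
    ∀ β₁ β₂ : ℝ,
      (0 ≤ β₁ ∧ β₁ ≤ βt₁) → (0 ≤ β₂ ∧ β₂ ≤ βt₂) →
      β₁ * D₁ + β₂ * D₂ ≤ S →
      β₁ + β₂ ≤ S / D₁ ∧ (β₁ + β₂ = S / D₁ → β₁ = S / D₁ ∧ β₂ = 0) := by
  rintro β₁ β₂ - ⟨hβ₂, -⟩ hsupply
  have hbound : (β₁ + β₂) * D₁ ≤ S := (add_mul_le_mul_add_mul hDlt.le hβ₂).trans hsupply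
  refine ⟨(le_div_iff₀ hD).2 hbound, fun hopt => ?_⟩
  have hfull : (β₁ + β₂) * D₁ = S := by rw [hopt, div_mul_cancel₀ S hD.ne']
  have hβ₂0 : β₂ = 0 := eq_zero_of_mul_add_mul_le_add_mul hDlt hβ₂ (hfull ▸ hsupply)
  exact ⟨by linarith, hβ₂0⟩

theorem stmt_11 (D₁ D₂ βt₁ βt₂ S : ℝ)
    (hD : 0 < D₁) (hDlt : D₁ < D₂)
    (hβt₁ : 0 < βt₁ ∧ βt₁ ≤ 1) (hβt₂ : 0 < βt₂ ∧ βt₂ ≤ 1)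
    (heff : βt₁ * D₁ = βt₂ * D₂)
    (hS0 : 0 < S) (hSlt : S < βt₁ * D₁) :
    ∀ β₁ β₂ : ℝ,
      (0 ≤ β₁ ∧ β₁ ≤ βt₁) → (0 ≤ β₂ ∧ β₂ ≤ βt₂) →
      β₁ * D₁ + β₂ * D₂ ≤ S →
      β₁ + β₂ ≤ S / D₁ ∧ (β₁ + β₂ = S / D₁ → β₁ = S / D₁ ∧ β₂ = 0) :=
  stmt_11_general D₁ D₂ βt₁ βt₂ S hD hDlt
end

section
/- Let β^EF be a feasible solution and K = {i : β_i^EF = β^EF} where β^EF = max_i β_i^EF < 1, and suppose L = {i ∉ K : β_i^EF < β̃_i} is empty and S < Σ_i β̃_i D_i. Set m^L = |K| < n. Then for every θ > m^L/(n − m^L), the solution β obtained from β^EF by reducing β_i to β^EF − α for all i ∈ K (α > 0 sufficiently small) is feasible and strictly dominates β^EF in the objective Σ_i [β_i − θ(max_j β_j − β_i)]. -/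
/-!
Lowering every maximal entry by `α` lowers the sum by `m α`, where `m` is the number of maximal
entries, and, once `α` is below the gap to the next largest entry, lowers the maximum by exactly
`α`. The objective `(1 + θ) ∑ β - n θ max β` therefore changes by `α (θ (n - m) - m)`, which is
positive precisely when `θ > m / (n - m)`. Feasibility is kept because entries only decrease and
stay nonnegative for `α` below the maximum.
-/

open Filter Topology

noncomputable def lowerLevel {ι : Type*} (f : ι → ℝ) (M α : ℝ) (i : ι) : ℝ :=
  if f i = M then f i - α else f i

section LowerLevel

variable {ι : Type*} {f : ι → ℝ} {M α : ℝ}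

theorem lowerLevel_le (hα : 0 ≤ α) (i : ι) : lowerLevel f M α i ≤ f i := by
  unfold lowerLevel
  split_ifs <;> linarith

theorem lowerLevel_nonneg (hf : ∀ i, 0 ≤ f i) (hαM : α ≤ M) (i : ι) :
    0 ≤ lowerLevel f M α i := by
  unfold lowerLevel
  split_ifs with h
  · linarith
  · exact hf i

theorem sum_lowerLevel (s : Finset ι) :
    ∑ i ∈ s, lowerLevel f M α i = ∑ i ∈ s, f i - (s.filter (f · = M)).card * α := by
  unfold lowerLevel
  rw [Finset.sum_ite, ← Finset.sum_filter_add_sum_filter_not s (f · = M), Finset.sum_sub_distrib,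
    Finset.sum_const, nsmul_eq_mul]
  ring

theorem sup'_lowerLevel {s : Finset ι} (hne : s.Nonempty) (hM : s.sup' hne f = M)
    (hgap : ∀ i ∈ s, f i ≠ M → f i ≤ M - α) : s.sup' hne (lowerLevel f M α) = M - α := by
  obtain ⟨k, hks, hk⟩ := Finset.exists_mem_eq_sup' hne f
  have hkM : f k = M := hk ▸ hM
  refine le_antisymm (Finset.sup'_le hne _ fun i hi => ?_) ?_
  · unfold lowerLevel
    split_ifs with h
    · rw [h]
    · exact hgap i hi h
  · calc M - α = lowerLevel f M α k := by simp [lowerLevel, hkM]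
      _ ≤ s.sup' hne (lowerLevel f M α) := Finset.le_sup' _ hks

theorem eventually_lt_sub_of_ne [Finite ι] (hf : ∀ i, f i ≤ M) :
    ∀ᶠ α in 𝓝[>] (0 : ℝ), ∀ i, f i ≠ M → f i < M - α := by
  refine eventually_all.2 fun i => ?_
  by_cases h : f i = M
  · exact .of_forall fun _ h' => absurd h h'
  · have : 0 < M - f i := sub_pos.2 ((hf i).lt_of_ne h)
    filter_upwards [(eventually_lt_nhds this).filter_mono nhdsWithin_le_nhds] with α hα _
    linarith

end LowerLevel

theorem penalized_objective_lt {N m θ α s M : ℝ} (hα : 0 < α) (hθ : m < θ * (N - m)) :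
    (1 + θ) * s - N * θ * M < (1 + θ) * (s - m * α) - N * θ * (M - α) := by
  nlinarith

theorem stmt_13_general (n mL : ℕ) (hne : (Finset.univ : Finset (Fin n)).Nonempty)
    (D βt βEF : Fin n → ℝ) (S βM : ℝ)
    (hD : ∀ i, 0 < D i)
    (hfeasEF : (∀ i, 0 ≤ βEF i ∧ βEF i ≤ βt i) ∧ (∑ i, βEF i * D i) ≤ S)
    (hβM : βM = Finset.univ.sup' hne βEF)
    (hβM0 : 0 < βM)
    (hmL : mL = (Finset.univ.filter (fun i => βEF i = βM)).card)
    (hmLn : mL < n) :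
    ∀ θ : ℝ, (mL : ℝ) / ((n : ℝ) - (mL : ℝ)) < θ →
      ∃ α₀ : ℝ, 0 < α₀ ∧ ∀ α : ℝ, 0 < α → α < α₀ →
        ((∀ i, 0 ≤ (fun i => if βEF i = βM then βEF i - α else βEF i) i ∧
            (fun i => if βEF i = βM then βEF i - α else βEF i) i ≤ βt i) ∧
          (∑ i, (fun i => if βEF i = βM then βEF i - α else βEF i) i * D i) ≤ S) ∧
        (1 + θ) * (∑ i, βEF i) - (n : ℝ) * θ * Finset.univ.sup' hne βEF <
          (1 + θ) * (∑ i, (fun i => if βEF i = βM then βEF i - α else βEF i) i)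
            - (n : ℝ) * θ *
              Finset.univ.sup' hne (fun i => if βEF i = βM then βEF i - α else βEF i) := by
  intro θ hθ
  have hle : ∀ i, βEF i ≤ βM := fun i => hβM ▸ Finset.le_sup' βEF (Finset.mem_univ i)
  have hθ' : (mL : ℝ) < θ * (n - mL) := by
    rwa [div_lt_iff₀ (sub_pos.2 (by exact_mod_cast hmLn))] at hθ
  have hsmall : ∀ᶠ α in 𝓝[>] (0 : ℝ), 0 < α ∧ α < βM ∧ ∀ i, βEF i ≠ βM → βEF i < βM - α :=
    eventually_mem_nhdsWithin.and <|
      ((eventually_lt_nhds hβM0).filter_mono nhdsWithin_le_nhds).and (eventually_lt_sub_of_ne hle)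
  obtain ⟨α₀, hα₀, hsub⟩ := mem_nhdsGT_iff_exists_Ioo_subset.1 hsmall
  refine ⟨α₀, hα₀, fun α hα hαα₀ => ?_⟩
  obtain ⟨hα, hαM, hgap⟩ := hsub ⟨hα, hαα₀⟩
  have hdec : ∀ i, lowerLevel βEF βM α i ≤ βEF i := lowerLevel_le hα.le
  refine ⟨⟨fun i => ⟨lowerLevel_nonneg (fun i => (hfeasEF.1 i).1) hαM.le i,
    (hdec i).trans (hfeasEF.1 i).2⟩, ?_⟩, ?_⟩
  · exact (Finset.sum_le_sum fun i _ =>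
      mul_le_mul_of_nonneg_right (hdec i) (hD i).le).trans hfeasEF.2
  · have hsup := sup'_lowerLevel hne hβM.symm fun i _ h => (hgap i h).le
    change _ < (1 + θ) * ∑ i, lowerLevel βEF βM α i
      - n * θ * Finset.univ.sup' hne (lowerLevel βEF βM α)
    rw [sum_lowerLevel, hsup, ← hβM, ← hmL]
    exact penalized_objective_lt hα hθ'

theorem stmt_13 (n mL : ℕ) (hne : (Finset.univ : Finset (Fin n)).Nonempty)
    (D βt βEF : Fin n → ℝ) (S βM : ℝ)
    (hD : ∀ i, 0 < D i) (hS : 0 < S)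
    (hβt : ∀ i, 0 < βt i ∧ βt i ≤ 1)
    (hfeasEF : (∀ i, 0 ≤ βEF i ∧ βEF i ≤ βt i) ∧ (∑ i, βEF i * D i) ≤ S)
    (hβM : βM = Finset.univ.sup' hne βEF)
    (hβM1 : βM < 1) (hβM0 : 0 < βM)
    (hLempty : ∀ i, βEF i ≠ βM → βEF i = βt i)
    (hsupply : S < ∑ i, βt i * D i)
    (hmL : mL = (Finset.univ.filter (fun i => βEF i = βM)).card)
    (hmLn : mL < n) :
    ∀ θ : ℝ, (mL : ℝ) / ((n : ℝ) - (mL : ℝ)) < θ →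
      ∃ α₀ : ℝ, 0 < α₀ ∧ ∀ α : ℝ, 0 < α → α < α₀ →
        ((∀ i, 0 ≤ (fun i => if βEF i = βM then βEF i - α else βEF i) i ∧
            (fun i => if βEF i = βM then βEF i - α else βEF i) i ≤ βt i) ∧
          (∑ i, (fun i => if βEF i = βM then βEF i - α else βEF i) i * D i) ≤ S) ∧
        (1 + θ) * (∑ i, βEF i) - (n : ℝ) * θ * Finset.univ.sup' hne βEF <
          (1 + θ) * (∑ i, (fun i => if βEF i = βM then βEF i - α else βEF i) i)
            - (n : ℝ) * θ *
              Finset.univ.sup' hne (fun i => if βEF i = βM then βEF i - α else βEF i) :=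
  stmt_13_general n mL hne D βt βEF S βM hD hfeasEF hβM hβM0 hmL hmLn
end
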